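/- Let φ be an LTL_ALCOu^ι formula, let names(φ) be the finite set of individual names occurring in φ, and let φ' be the conjunction of φ with the formulas □⁺(⊤ ⊑ ∃u.{a}) for every a ∈ names(φ). Then φ is satisfied at instant 0 of some total infinite trace if and only if φ' is satisfied at instant 0 of some partial infinite trace. No rigid designator assumption is imposed. -/

import Mathlib

mutual
inductive Tm : Type where
  | ind  : ℕ → Tm          -- individual name
  | iota : Cpt → Tm        -- definite description ιC
  deriving DecidableEq

inductive Cpt : Type where
  | atom  : ℕ → Cpt        -- concept name
  | nom   : Tm → Cpt       -- nominal {τ}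
  | neg   : Cpt → Cpt
  | inter : Cpt → Cpt → Cpt
  | ex    : ℕ → Cpt → Cpt  -- ∃r.C, r a role name
  | exu   : Cpt → Cpt      -- ∃u.C, u the universal role
  | untl  : Cpt → Cpt → Cpt -- C U D
  deriving DecidableEq
end

/-- Formulas of `LTL_ALCOu^ι`. -/
inductive Fm : Type where
  | sub  : Cpt → Cpt → Fm   -- C ⊑ D
  | neg  : Fm → Fm
  | and  : Fm → Fm → Fm
  | untl : Fm → Fm → Fm     -- φ U ψ
  deriving DecidableEq

/-- Partial infinite trace (constant domain, flow of time `(ℕ, <)`). -/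
structure Trace where
  Δ : Type
  hΔ : Nonempty Δ
  cI : ℕ → ℕ → Set Δ
  rI : ℕ → ℕ → Set (Δ × Δ)
  iI : ℕ → ℕ → Option Δ

open Classical in
/-- The value of a definite description: defined iff the set is a singleton. -/
noncomputable def iotaVal {D : Type} (s : Set D) : Option D :=
  if h : ∃ d, s = {d} then some h.choose else none

mutual
/-- Value of a term at an instant (partial, given as `Option`). -/
noncomputable def tmVal (M : Trace) : ℕ → Tm → Option M.Δ
  | t, .ind a  => M.iI t a
  | t, .iota C => iotaVal (cExt M t C)

/-- Extension of a concept at an instant. -/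
noncomputable def cExt (M : Trace) : ℕ → Cpt → Set M.Δ
  | t, .atom A    => M.cI t A
  | t, .nom τ     => {d | tmVal M t τ = some d}
  | t, .neg C     => (cExt M t C)ᶜ
  | t, .inter C D => cExt M t C ∩ cExt M t D
  | t, .ex r C    => {d | ∃ e, (d, e) ∈ M.rI t r ∧ e ∈ cExt M t C}
  | t, .exu C     => {_d : M.Δ | ∃ e, e ∈ cExt M t C}
  | t, .untl C D  =>
      {d | ∃ u, t < u ∧ d ∈ cExt M u D ∧ ∀ v, t < v → v < u → d ∈ cExt M v C}
end

/-- Satisfaction of a formula at an instant. -/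
def sat (M : Trace) : ℕ → Fm → Prop
  | t, .sub C D  => cExt M t C ⊆ cExt M t D
  | t, .neg φ    => ¬ sat M t φ
  | t, .and φ ψ  => sat M t φ ∧ sat M t ψ
  | t, .untl φ ψ => ∃ u, t < u ∧ sat M u ψ ∧ ∀ v, t < v → v < u → sat M v φ

/-- Standard abbreviations. -/
def cBot : Cpt := .inter (.atom 0) (.neg (.atom 0))
def cTop : Cpt := .neg cBot
def cOr (C D : Cpt) : Cpt := .neg (.inter (.neg C) (.neg D))
def cImp (C D : Cpt) : Cpt := cOr (.neg C) D
def cAllu (C : Cpt) : Cpt := .neg (.exu (.neg C))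
def cNext (C : Cpt) : Cpt := .untl cBot C
def cDia (C : Cpt) : Cpt := .untl cTop C
def cBox (C : Cpt) : Cpt := .neg (cDia (.neg C))
def cDiaP (C : Cpt) : Cpt := cOr C (cDia C)
def cBoxP (C : Cpt) : Cpt := .inter C (cBox C)
def fTop : Fm := .sub cTop cTop
def fBoxP (φ : Fm) : Fm := .and φ (.neg (.untl fTop (.neg φ)))

mutual
def tmNames : Tm → Finset ℕ
  | .ind a  => {a}
  | .iota C => cNames C

def cNames : Cpt → Finset ℕ
  | .atom _    => ∅
  | .nom τ     => tmNames τ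
  | .neg C     => cNames C
  | .inter C D => cNames C ∪ cNames D
  | .ex _ C    => cNames C
  | .exu C     => cNames C
  | .untl C D  => cNames C ∪ cNames D
end

/-- Individual names occurring in a formula. -/
def fmNames : Fm → Finset ℕ
  | .sub C D  => cNames C ∪ cNames D
  | .neg φ    => fmNames φ
  | .and φ ψ  => fmNames φ ∪ fmNames ψ
  | .untl φ ψ => fmNames φ ∪ fmNames ψ

/-- Totality: every individual name denotes at every instant. -/
def Trace.total (M : Trace) : Prop := ∀ t a, (M.iI t a).isSome

/-- The formula `□⁺(⊤ ⊑ ∃u.{a})` forcing the individual name `a` to denote at all instants. -/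
def denoteAx (a : ℕ) : Fm := fBoxP (.sub cTop (.exu (.nom (.ind a))))

/-- `φ'`: the conjunction of `φ` with `□⁺(⊤ ⊑ ∃u.{a})` for every `a ∈ names(φ)`. -/
noncomputable def rigidify (φ : Fm) : Fm := ((fmNames φ).toList.map denoteAx).foldr Fm.and φ

-- Auxiliary lemmas

lemma cExt_cBot (M : Trace) (t : ℕ) : cExt M t cBot = ∅ := by
  simp [cBot, cExt]

lemma cExt_cTop (M : Trace) (t : ℕ) : cExt M t cTop = Set.univ := by
  simp [cTop, cExt, cExt_cBot]

lemma sat_fTop (M : Trace) (t : ℕ) : sat M t fTop := by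
  simp [fTop, sat]

lemma sat_denoteAx_iff (M : Trace) (a : ℕ) :
    sat M 0 (denoteAx a) ↔ ∀ t, (M.iI t a).isSome := by
  have hψ : ∀ t, sat M t (Fm.sub cTop (.exu (.nom (.ind a)))) ↔ (M.iI t a).isSome := by
    intro t
    simp only [sat, cExt_cTop, Set.univ_subset_iff]
    constructor
    · intro h
      obtain ⟨d⟩ := M.hΔ
      have hd : d ∈ cExt M t (Cpt.exu (.nom (.ind a))) := h ▸ Set.mem_univ d
      obtain ⟨e, he⟩ := hd
      simp only [cExt, tmVal, Set.mem_setOf_eq] at he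
      simp [he]
    · intro h
      ext d
      simp only [Set.mem_univ, iff_true]
      obtain ⟨e, he⟩ := Option.isSome_iff_exists.mp h
      exact ⟨e, by simp [cExt, tmVal, he]⟩
  constructor
  · rintro ⟨h0, hbox⟩ t
    rcases Nat.eq_zero_or_pos t with rfl | ht
    · exact (hψ 0).mp h0
    · by_contra hcon
      exact hbox ⟨t, ht, fun hs => hcon ((hψ t).mp hs),
        fun v _ _ => sat_fTop M v⟩
  · intro h
    refine ⟨(hψ 0).mpr (h 0), ?_⟩
    rintro ⟨u, hu, hns, -⟩
    exact hns ((hψ u).mpr (h u))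

lemma sat_foldr_and (M : Trace) (t : ℕ) (l : List Fm) (φ : Fm) :
    sat M t (l.foldr Fm.and φ) ↔ (∀ ψ ∈ l, sat M t ψ) ∧ sat M t φ := by
  induction l with
  | nil => simp
  | cons ψ l ih =>
    simp only [List.foldr_cons, List.mem_cons]
    constructor
    · rintro ⟨h1, h2⟩
      obtain ⟨ha, hb⟩ := ih.mp h2
      exact ⟨fun χ hχ => hχ.elim (fun e => e ▸ h1) (ha χ), hb⟩
    · rintro ⟨ha, hb⟩
      exact ⟨ha ψ (Or.inl rfl), ih.mpr ⟨fun χ hχ => ha χ (Or.inr hχ), hb⟩⟩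

/-- Trace with a modified individual-name interpretation. -/
def withII (M : Trace) (f : ℕ → ℕ → Option M.Δ) : Trace :=
  { M with iI := f }

mutual
theorem tmVal_congr (M : Trace) (f : ℕ → ℕ → Option M.Δ) (τ : Tm)
    (h : ∀ a ∈ tmNames τ, ∀ s, f s a = M.iI s a) (t : ℕ) :
    tmVal (withII M f) t τ = tmVal M t τ := by
  cases τ with
  | ind a =>
      simp only [tmVal, withII]
      exact h a (by simp [tmNames]) t
  | iota C =>
      simp only [tmVal]
      rw [cExt_congr M f C (by simpa [tmNames, cNames] using h) t]
      rfl

theorem cExt_congr (M : Trace) (f : ℕ → ℕ → Option M.Δ) (C : Cpt)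
    (h : ∀ a ∈ cNames C, ∀ s, f s a = M.iI s a) (t : ℕ) :
    cExt (withII M f) t C = cExt M t C := by
  cases C with
  | atom A => simp [cExt, withII]
  | nom τ =>
      show {d | tmVal (withII M f) t τ = some d} = {d | tmVal M t τ = some d}
      rw [tmVal_congr M f τ (by simpa [cNames] using h) t]
      rfl
  | neg C =>
      simp only [cExt]
      rw [cExt_congr M f C (by simpa [cNames] using h) t]
      rfl
  | inter C D =>
      simp only [cExt]
      rw [cExt_congr M f C (fun a ha => h a (by simp [cNames, ha])) t,
        cExt_congr M f D (fun a ha => h a (by simp [cNames, ha])) t]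
      rfl
  | ex r C =>
      show {d | ∃ e, (d, e) ∈ (withII M f).rI t r ∧ e ∈ cExt (withII M f) t C} =
        {d | ∃ e, (d, e) ∈ M.rI t r ∧ e ∈ cExt M t C}
      rw [cExt_congr M f C (by simpa [cNames] using h) t]
      rfl
  | exu C =>
      show {_d | ∃ e, e ∈ cExt (withII M f) t C} = {_d | ∃ e, e ∈ cExt M t C}
      rw [cExt_congr M f C (by simpa [cNames] using h) t]
      rfl
  | untl C D =>
      ext d
      simp only [cExt, Set.mem_setOf_eq]
      constructor
      · rintro ⟨u, hu, hd, hv⟩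
        refine ⟨u, hu, ?_, fun v h1 h2 => ?_⟩
        · rw [← cExt_congr M f D (fun a ha => h a (by simp [cNames, ha])) u]; exact hd
        · rw [← cExt_congr M f C (fun a ha => h a (by simp [cNames, ha])) v]
          exact hv v h1 h2
      · rintro ⟨u, hu, hd, hv⟩
        refine ⟨u, hu, ?_, fun v h1 h2 => ?_⟩
        · rw [cExt_congr M f D (fun a ha => h a (by simp [cNames, ha])) u]; exact hd
        · rw [cExt_congr M f C (fun a ha => h a (by simp [cNames, ha])) v]
          exact hv v h1 h2
end

theorem sat_congr (M : Trace) (f : ℕ → ℕ → Option M.Δ) (φ : Fm)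
    (h : ∀ a ∈ fmNames φ, ∀ s, f s a = M.iI s a) (t : ℕ) :
    sat (withII M f) t φ ↔ sat M t φ := by
  induction φ generalizing t with
  | sub C D =>
      simp only [sat]
      rw [cExt_congr M f C (fun a ha => h a (by simp [fmNames, ha])) t,
        cExt_congr M f D (fun a ha => h a (by simp [fmNames, ha])) t]
      rfl
  | neg ψ ih => simp only [sat]; rw [ih (by simpa [fmNames] using h)]
  | and ψ χ ih1 ih2 =>
      simp only [sat]
      rw [ih1 (fun a ha => h a (by simp [fmNames, ha])),
        ih2 (fun a ha => h a (by simp [fmNames, ha]))]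
  | untl ψ χ ih1 ih2 =>
      simp only [sat]
      constructor
      · rintro ⟨u, hu, hc, hv⟩
        exact ⟨u, hu, (ih2 (fun a ha => h a (by simp [fmNames, ha])) u).mp hc,
          fun v h1 h2 => (ih1 (fun a ha => h a (by simp [fmNames, ha])) v).mp (hv v h1 h2)⟩
      · rintro ⟨u, hu, hc, hv⟩
        exact ⟨u, hu, (ih2 (fun a ha => h a (by simp [fmNames, ha])) u).mpr hc,
          fun v h1 h2 => (ih1 (fun a ha => h a (by simp [fmNames, ha])) v).mpr (hv v h1 h2)⟩

theorem totalSat_iff_partialSat_rigidify' (φ : Fm) :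
    (∃ M : Trace, M.total ∧ sat M 0 φ) ↔ (∃ M : Trace, sat M 0 (rigidify φ)) := by
  constructor
  · rintro ⟨M, htot, hsat⟩
    refine ⟨M, ?_⟩
    rw [rigidify, sat_foldr_and]
    refine ⟨?_, hsat⟩
    intro ψ hψ
    simp only [List.mem_map] at hψ
    obtain ⟨a, -, rfl⟩ := hψ
    exact (sat_denoteAx_iff M a).mpr fun t => htot t a
  · rintro ⟨M, hsat⟩
    rw [rigidify, sat_foldr_and] at hsat
    obtain ⟨hax, hφ⟩ := hsat
    obtain ⟨d0⟩ := M.hΔ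
    set f : ℕ → ℕ → Option M.Δ := fun t a => some ((M.iI t a).getD d0) with hf
    have hagree : ∀ a ∈ fmNames φ, ∀ s, f s a = M.iI s a := by
      intro a ha s
      have hmem : denoteAx a ∈ List.map denoteAx (fmNames φ).toList :=
        List.mem_map.mpr ⟨a, Finset.mem_toList.mpr ha, rfl⟩
      have := (sat_denoteAx_iff M a).mp (hax _ hmem) s
      obtain ⟨e, he⟩ := Option.isSome_iff_exists.mp this
      simp [hf, he]
    refine ⟨withII M f, ?_, ?_⟩
    · intro t a; simp [withII, hf]
    · exact (sat_congr M f φ hagree 0).mpr hφ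

/-- `φ` is satisfied at instant 0 of some total infinite trace iff
`φ'` is satisfied at instant 0 of some partial infinite trace (no RDA). -/
theorem totalSat_iff_partialSat_rigidify (φ : Fm) :
    (∃ M : Trace, M.total ∧ sat M 0 φ) ↔ (∃ M : Trace, sat M 0 (rigidify φ)) := by
  exact totalSat_iff_partialSat_rigidify' φ
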